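/- arXiv:1102.1061 — 2 statements merged into one kernel-verified Lean document; each statement's English description precedes it below -/
import Mathlib

section
/- Completeness (reify) for the universal IK-CPS model: for any formula A and context Γ, if Γ forces A in the universal model, then there exists a proof term p in normal form such that Γ ⊢ p : A in MQC. -/
/-- First-order formulas of minimal predicate logic (MQC), with atomic
formulas drawn from `Atm` and quantification encoded via functions from
individual terms `Trm` (weak HOAS). -/
inductive Fml (Atm Trm : Type) : Type where
  | atom : Atm → Fml Atm Trm
  | and : Fml Atm Trm → Fml Atm Trm → Fml Atm Trm
  | or : Fml Atm Trm → Fml Atm Trm → Fml Atm Trm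
  | imp : Fml Atm Trm → Fml Atm Trm → Fml Atm Trm
  | all : (Trm → Fml Atm Trm) → Fml Atm Trm
  | ex : (Trm → Fml Atm Trm) → Fml Atm Trm

/-- An Intuitionistic Kripke-CPS model. -/
structure IKCPS (Atm Trm : Type) where
  W : Type
  le : W → W → Prop
  le_refl : ∀ w, le w w
  le_trans : ∀ {a b c}, le a b → le b c → le a c
  /-- binary exploding relation between worlds and formulas -/
  explode : W → Fml Atm Trm → Prop
  /-- strong forcing of atomic formulas -/
  satom : W → Atm → Prop
  satom_mono : ∀ {w w' X}, le w w' → satom w X → satom w' X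
  Dom : W → Set Trm
  Dom_mono : ∀ {w w'}, le w w' → Dom w ⊆ Dom w'

namespace IKCPS

variable {Atm Trm : Type}

/-- The continuation ("forcing") monad over a predicate `S` of strong forcing:
`w ⊩ A` iff for all formulas `C`, for all `w' ≥ w`,
`(∀ w'' ≥ w', w'' ⊩ₛ A → w'' ⊩_E C) → w' ⊩_E C`. -/
def fa (M : IKCPS Atm Trm) (S : M.W → Prop) (w : M.W) : Prop :=
  ∀ C : Fml Atm Trm, ∀ w', M.le w w' →
    (∀ w'', M.le w' w'' → S w'' → M.explode w'' C) → M.explode w' C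

/-- Strong forcing, extended from atomic to composite formulas. -/
def sforces (M : IKCPS Atm Trm) : Fml Atm Trm → M.W → Prop
  | .atom X => fun w => M.satom w X
  | .and A B => fun w => M.fa (M.sforces A) w ∧ M.fa (M.sforces B) w
  | .or A B => fun w => M.fa (M.sforces A) w ∨ M.fa (M.sforces B) w
  | .imp A B => fun w => ∀ w', M.le w w' → M.fa (M.sforces A) w' → M.fa (M.sforces B) w'
  | .all A => fun w => ∀ w', M.le w w' → ∀ t ∈ M.Dom w', M.fa (M.sforces (A t)) w'
  | .ex A => fun w => ∃ t ∈ M.Dom w, M.fa (M.sforces (A t)) w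

/-- (Non-strong) forcing. -/
def forces (M : IKCPS Atm Trm) (A : Fml Atm Trm) (w : M.W) : Prop :=
  M.fa (M.sforces A) w

end IKCPS

/-- Natural deduction for minimal intuitionistic predicate logic (MQC).
`Deriv Γ A` states that there is a proof term `p` with `Γ ⊢ p : A`. -/
inductive Deriv {Atm Trm : Type} : List (Fml Atm Trm) → Fml Atm Trm → Prop where
  | ax {Γ A} : A ∈ Γ → Deriv Γ A
  | andI {Γ A B} : Deriv Γ A → Deriv Γ B → Deriv Γ (.and A B)
  | andE1 {Γ A B} : Deriv Γ (.and A B) → Deriv Γ A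
  | andE2 {Γ A B} : Deriv Γ (.and A B) → Deriv Γ B
  | orI1 {Γ A B} : Deriv Γ A → Deriv Γ (.or A B)
  | orI2 {Γ A B} : Deriv Γ B → Deriv Γ (.or A B)
  | orE {Γ A B C} : Deriv Γ (.or A B) → Deriv (A :: Γ) C → Deriv (B :: Γ) C → Deriv Γ C
  | impI {Γ A B} : Deriv (A :: Γ) B → Deriv Γ (.imp A B)
  | impE {Γ A B} : Deriv Γ (.imp A B) → Deriv Γ A → Deriv Γ B
  | allI {Γ A} : (∀ t, Deriv Γ (A t)) → Deriv Γ (.all A)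
  | allE {Γ A} (t : Trm) : Deriv Γ (.all A) → Deriv Γ (A t)
  | exI {Γ A} (t : Trm) : Deriv Γ (A t) → Deriv Γ (.ex A)
  | exE {Γ A C} : Deriv Γ (.ex A) → (∀ t, Deriv (A t :: Γ) C) → Deriv Γ C

/-- Normal (`b = true`) and neutral (`b = false`) natural deduction derivations,
defined simultaneously.  `NND true Γ A` means there is a proof term in normal
form `r` with `Γ ⊢ r : A`; `NND false Γ A` means there is a neutral proof term
`e` with `Γ ⊢ e : A`. -/
inductive NND {Atm Trm : Type} : Bool → List (Fml Atm Trm) → Fml Atm Trm → Prop where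
  | ne {Γ A} : NND false Γ A → NND true Γ A
  | ax {Γ A} : A ∈ Γ → NND false Γ A
  | andI {Γ A B} : NND true Γ A → NND true Γ B → NND true Γ (.and A B)
  | andE1 {Γ A B} : NND false Γ (.and A B) → NND false Γ A
  | andE2 {Γ A B} : NND false Γ (.and A B) → NND false Γ B
  | orI1 {Γ A B} : NND true Γ A → NND true Γ (.or A B)
  | orI2 {Γ A B} : NND true Γ B → NND true Γ (.or A B)
  | orE {Γ A B C} : NND false Γ (.or A B) → NND true (A :: Γ) C → NND true (B :: Γ) C →
      NND false Γ C
  | impI {Γ A B} : NND true (A :: Γ) B → NND true Γ (.imp A B)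
  | impE {Γ A B} : NND false Γ (.imp A B) → NND true Γ A → NND false Γ B
  | allI {Γ A} : (∀ t, NND true Γ (A t)) → NND true Γ (.all A)
  | allE {Γ A} (t : Trm) : NND false Γ (.all A) → NND false Γ (A t)
  | exI {Γ A} (t : Trm) : NND true Γ (A t) → NND true Γ (.ex A)
  | exE {Γ A C} : NND false Γ (.ex A) → (∀ t, NND true (A t :: Γ) C) → NND false Γ C

/-- There is a normal-form derivation `Γ ⊢ r : A`. -/
def NfD {Atm Trm : Type} (Γ : List (Fml Atm Trm)) (A : Fml Atm Trm) : Prop :=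
  NND true Γ A

/-- There is a neutral derivation `Γ ⊢ e : A`. -/
def NeD {Atm Trm : Type} (Γ : List (Fml Atm Trm)) (A : Fml Atm Trm) : Prop :=
  NND false Γ A

theorem NND.weaken {Atm Trm : Type} {b : Bool} {Γ Γ' : List (Fml Atm Trm)}
    {A : Fml Atm Trm} (d : NND b Γ A) (h : Γ ⊆ Γ') : NND b Γ' A := by
  induction d generalizing Γ' with
  | ne _ ih => exact .ne (ih h)
  | ax hm => exact .ax (h hm)
  | andI _ _ ih1 ih2 => exact .andI (ih1 h) (ih2 h)
  | andE1 _ ih => exact .andE1 (ih h)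
  | andE2 _ ih => exact .andE2 (ih h)
  | orI1 _ ih => exact .orI1 (ih h)
  | orI2 _ ih => exact .orI2 (ih h)
  | orE _ _ _ ih ih1 ih2 =>
      exact .orE (ih h) (ih1 (List.cons_subset_cons _ h)) (ih2 (List.cons_subset_cons _ h))
  | impI _ ih => exact .impI (ih (List.cons_subset_cons _ h))
  | impE _ _ ih1 ih2 => exact .impE (ih1 h) (ih2 h)
  | allI _ ih => exact .allI fun t => ih t h
  | allE t _ ih => exact .allE t (ih h)
  | exI t _ ih => exact .exI t (ih h)
  | exE _ _ ih ih2 => exact .exE (ih h) fun t => ih2 t (List.cons_subset_cons _ h)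

/-- The universal IK-CPS model: worlds are contexts of MQC ordered by
inclusion, strong forcing of an atom and the exploding relation are given by
normal-form derivability, and the domain of quantification is constant. -/
def univModel (Atm Trm : Type) : IKCPS Atm Trm where
  W := List (Fml Atm Trm)
  le Γ Γ' := Γ ⊆ Γ'
  le_refl _ := List.Subset.refl _
  le_trans h1 h2 := List.Subset.trans h1 h2
  explode Γ C := NfD Γ C
  satom Γ X := NfD Γ (.atom X)
  satom_mono h d := d.weaken h
  Dom _ := Set.univ
  Dom_mono _ := le_rfl

/-
Reify and reflect are proved together by induction on the formula, since the antecedent of `→`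
swaps their roles. Reification reads a normal proof off strong forcing, introduction rule by
introduction rule; a forcing `Γ ⊩ A` is reified by running its continuation with answer type `A`.
Reflection applies elimination rules to a neutral proof: for `∨` and `∃` the continuation is
called in the context extended by a fresh hypothesis, which reflection of the components turns
into forcing, and the result is closed by a `case`/`dest` on the neutral proof.
-/

namespace IKCPS

variable {Atm Trm : Type} (M : IKCPS Atm Trm) {S T : M.W → Prop} {w : M.W}

theorem fa_of_forall_le (h : ∀ w', M.le w w' → S w') : M.fa S w :=
  fun _ w' hw k => k w' (M.le_refl w') (h w' hw)

theorem fa_run {C : Fml Atm Trm} (h : M.fa S w)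
    (k : ∀ w', M.le w w' → S w' → M.explode w' C) : M.explode w C :=
  h C w (M.le_refl w) k

theorem fa_bind (h : M.fa S w) (f : ∀ w', M.le w w' → S w' → M.fa T w') : M.fa T w :=
  fun C w' hw k => h C w' hw fun w'' hw'' hs =>
    M.fa_run (f w'' (M.le_trans hw hw'') hs) fun w₃ hw₃ ht => k w₃ (M.le_trans hw'' hw₃) ht

end IKCPS

namespace univModel

variable {Atm Trm : Type} {A B : Fml Atm Trm}

def Reifies (A : Fml Atm Trm) : Prop :=
  ∀ Γ, (univModel Atm Trm).sforces A Γ → NfD Γ A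

def Reflects (A : Fml Atm Trm) : Prop :=
  ∀ Γ, NeD Γ A → (univModel Atm Trm).forces A Γ

theorem Reifies.nfD_of_forces (hA : Reifies A) {Γ : List (Fml Atm Trm)}
    (h : (univModel Atm Trm).forces A Γ) : NfD Γ A :=
  IKCPS.fa_run _ h fun Γ' _ hs => hA Γ' hs

theorem Reflects.forces_hyp (hA : Reflects A) (Γ : List (Fml Atm Trm)) :
    (univModel Atm Trm).forces A (A :: Γ) :=
  hA _ (.ax List.mem_cons_self)

theorem reifies_atom (X : Atm) : Reifies (Trm := Trm) (.atom X) :=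
  fun _ h => h

theorem reflects_atom (X : Atm) : Reflects (Trm := Trm) (.atom X) :=
  fun _ e => IKCPS.fa_of_forall_le _ fun _ hΓ => .ne (e.weaken hΓ)

theorem reifies_and (hA : Reifies A) (hB : Reifies B) : Reifies (.and A B) :=
  fun _ ⟨fA, fB⟩ => .andI (hA.nfD_of_forces fA) (hB.nfD_of_forces fB)

theorem reflects_and (hA : Reflects A) (hB : Reflects B) : Reflects (.and A B) :=
  fun _ e => IKCPS.fa_of_forall_le _ fun _ hΓ =>
    ⟨hA _ (.andE1 (e.weaken hΓ)), hB _ (.andE2 (e.weaken hΓ))⟩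

theorem reifies_or (hA : Reifies A) (hB : Reifies B) : Reifies (.or A B) := by
  rintro _ (fA | fB)
  · exact .orI1 (hA.nfD_of_forces fA)
  · exact .orI2 (hB.nfD_of_forces fB)

theorem reflects_or (hA : Reflects A) (hB : Reflects B) : Reflects (.or A B) :=
  fun _ e _ Γ' hΓ k => .ne <| .orE (e.weaken hΓ)
    (k _ (List.subset_cons_self _ _) (.inl (hA.forces_hyp Γ')))
    (k _ (List.subset_cons_self _ _) (.inr (hB.forces_hyp Γ')))

theorem reifies_imp (hA : Reflects A) (hB : Reifies B) : Reifies (.imp A B) :=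
  fun Γ h => .impI <| hB.nfD_of_forces <| h _ (List.subset_cons_self _ _) (hA.forces_hyp Γ)

theorem reflects_imp (hA : Reifies A) (hB : Reflects B) : Reflects (.imp A B) :=
  fun _ e => IKCPS.fa_of_forall_le _ fun _ hΓ _ hΓ' fA =>
    IKCPS.fa_bind _ fA fun _ hΓ'' sA =>
      hB _ (.impE (e.weaken (List.Subset.trans (List.Subset.trans hΓ hΓ') hΓ'')) (hA _ sA))

theorem reifies_all {A : Trm → Fml Atm Trm} (hA : ∀ t, Reifies (A t)) : Reifies (.all A) :=
  fun Γ h => .allI fun t => (hA t).nfD_of_forces (h Γ (List.Subset.refl Γ) t trivial)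

theorem reflects_all {A : Trm → Fml Atm Trm} (hA : ∀ t, Reflects (A t)) : Reflects (.all A) :=
  fun _ e => IKCPS.fa_of_forall_le _ fun _ hΓ _ hΓ' t _ =>
    hA t _ (.allE t (e.weaken (List.Subset.trans hΓ hΓ')))

theorem reifies_ex {A : Trm → Fml Atm Trm} (hA : ∀ t, Reifies (A t)) : Reifies (.ex A) :=
  fun _ ⟨t, _, ft⟩ => .exI t ((hA t).nfD_of_forces ft)

theorem reflects_ex {A : Trm → Fml Atm Trm} (hA : ∀ t, Reflects (A t)) : Reflects (.ex A) :=
  fun _ e _ Γ' hΓ k => .ne <| .exE (e.weaken hΓ) fun t =>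
    k _ (List.subset_cons_self _ _) ⟨t, trivial, (hA t).forces_hyp Γ'⟩

theorem reifies_and_reflects (A : Fml Atm Trm) : Reifies A ∧ Reflects A := by
  induction A with
  | atom X => exact ⟨reifies_atom X, reflects_atom X⟩
  | and A B ihA ihB => exact ⟨reifies_and ihA.1 ihB.1, reflects_and ihA.2 ihB.2⟩
  | or A B ihA ihB => exact ⟨reifies_or ihA.1 ihB.1, reflects_or ihA.2 ihB.2⟩
  | imp A B ihA ihB => exact ⟨reifies_imp ihA.2 ihB.1, reflects_imp ihA.1 ihB.2⟩
  | all A ih => exact ⟨reifies_all fun t => (ih t).1, reflects_all fun t => (ih t).2⟩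
  | ex A ih => exact ⟨reifies_ex fun t => (ih t).1, reflects_ex fun t => (ih t).2⟩

end univModel

/-- Completeness (reify) for the universal IK-CPS model. -/
theorem reify {Atm Trm : Type} (A : Fml Atm Trm) (Γ : List (Fml Atm Trm))
    (h : (univModel Atm Trm).forces A Γ) : NfD Γ A :=
  (univModel.reifies_and_reflects A).1.nfD_of_forces h
end

section
/- In any CK-CPS model, double-negation elimination holds for forcing: for every formula A and world w, if w forces ¬¬A (i.e., ((A ⇒ ⊥) ⇒ ⊥)), then w forces A, where ⊥ is interpreted via the exploding predicate. -/
/-- First-order formulas of predicate logic, including `⊥`, with atoms from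
`Atm` and quantification via functions from individual terms `Trm`. -/
inductive FmlB (Atm Trm : Type) : Type where
  | bot : FmlB Atm Trm
  | atom : Atm → FmlB Atm Trm
  | and : FmlB Atm Trm → FmlB Atm Trm → FmlB Atm Trm
  | or : FmlB Atm Trm → FmlB Atm Trm → FmlB Atm Trm
  | imp : FmlB Atm Trm → FmlB Atm Trm → FmlB Atm Trm
  | all : (Trm → FmlB Atm Trm) → FmlB Atm Trm
  | ex : (Trm → FmlB Atm Trm) → FmlB Atm Trm

/-- A Classical Kripke-CPS model, with a unary exploding predicate. -/
structure CKCPS (Atm Trm : Type) where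
  W : Type
  le : W → W → Prop
  le_refl : ∀ w, le w w
  le_trans : ∀ {a b c}, le a b → le b c → le a c
  /-- unary exploding predicate on worlds -/
  explode : W → Prop
  satom : W → Atm → Prop
  satom_mono : ∀ {w w' X}, le w w' → satom w X → satom w' X
  Dom : W → Set Trm
  Dom_mono : ∀ {w w'}, le w w' → Dom w ⊆ Dom w'

namespace CKCPS

variable {Atm Trm : Type}

/-- `w` refutes `A` (given strong forcing `S` of `A`): every `w' ≥ w` strongly
forcing `A` is exploding. -/
def refut (M : CKCPS Atm Trm) (S : M.W → Prop) (w : M.W) : Prop :=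
  ∀ w', M.le w w' → S w' → M.explode w'

/-- `w` forces `A` (given strong forcing `S` of `A`): every `w' ≥ w` refuting
`A` is exploding. -/
def fc (M : CKCPS Atm Trm) (S : M.W → Prop) (w : M.W) : Prop :=
  ∀ w', M.le w w' → M.refut S w' → M.explode w'

/-- Strong forcing in a CK-CPS model, with `w ⊩ₛ ⊥` given by the exploding
predicate. -/
def sforces (M : CKCPS Atm Trm) : FmlB Atm Trm → M.W → Prop
  | .bot => fun w => M.explode w
  | .atom X => fun w => M.satom w X
  | .and A B => fun w => M.fc (M.sforces A) w ∧ M.fc (M.sforces B) w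
  | .or A B => fun w => M.fc (M.sforces A) w ∨ M.fc (M.sforces B) w
  | .imp A B => fun w => ∀ w', M.le w w' → M.fc (M.sforces A) w' → M.fc (M.sforces B) w'
  | .all A => fun w => ∀ w', M.le w w' → ∀ t ∈ M.Dom w', M.fc (M.sforces (A t)) w'
  | .ex A => fun w => ∃ t ∈ M.Dom w, M.fc (M.sforces (A t)) w

/-- (Non-strong) forcing in a CK-CPS model. -/
def forces (M : CKCPS Atm Trm) (A : FmlB Atm Trm) (w : M.W) : Prop :=
  M.fc (M.sforces A) w

end CKCPS

/-! A world refuting `A` also refutes `¬¬A`: every world above it forces `¬A`, and a world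
strongly forcing `¬¬A` and forcing `¬A` forces `⊥`, hence explodes. Since forcing is the
dual of refutation, `w ⊩ ¬¬A` makes every refuter of `A` above `w` explode, i.e. `w ⊩ A`. -/

namespace CKCPS

variable {Atm Trm : Type} (M : CKCPS Atm Trm)

theorem refut_mono {S : M.W → Prop} {w w' : M.W} (hw : M.le w w') (h : M.refut S w) :
    M.refut S w' :=
  fun v hv hS => h v (M.le_trans hw hv) hS

theorem refut_explode (w : M.W) : M.refut M.explode w :=
  fun _ _ he => he

theorem explode_of_forces_bot {w : M.W} (h : M.forces .bot w) : M.explode w :=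
  h w (M.le_refl w) (M.refut_explode w)

theorem forces_neg_of_refut {A : FmlB Atm Trm} {w : M.W} (hA : M.refut (M.sforces A) w) :
    M.forces (.imp A .bot) w := by
  intro v hv hrv
  refine hrv v (M.le_refl v) fun u hu hfA x hx _ => ?_
  exact hfA x hx (M.refut_mono (M.le_trans hv (M.le_trans hu hx)) hA)

theorem refut_dneg_of_refut {A : FmlB Atm Trm} {w : M.W} (hA : M.refut (M.sforces A) w) :
    M.refut (M.sforces (.imp (.imp A .bot) .bot)) w :=
  fun v hv hdn => M.explode_of_forces_bot
    (hdn v (M.le_refl v) (M.forces_neg_of_refut (M.refut_mono hv hA)))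

end CKCPS

/-- double-negation elimination holds for forcing in any CK-CPS
model, `⊥` being interpreted via the exploding predicate. -/
theorem forces_dne {Atm Trm : Type} (M : CKCPS Atm Trm) (A : FmlB Atm Trm) (w : M.W)
    (h : M.forces (.imp (.imp A .bot) .bot) w) : M.forces A w :=
  fun v hv hA => h v hv (M.refut_dneg_of_refut hA)
end
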